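/- Let k be a commutative ring and V a free k-module of finite rank r. Then Tr_Λ ∘ i is the identity on ⋀V^∨; that is, for every n with 0 ≤ n ≤ r and every ω ∈ ⋀^nV^∨, the generalized supertrace of the endomorphism i(ω) of ⋀V equals ω. -/

import Mathlib

/-!
The endomorphism `i(ω)` has rank one: it is `x ↦ ω(xₙ) • 1`, so `ε ∘ l_η ∘ i(ω)` is
`x ↦ ω(xₙ) • ε(η)`, whose trace is `ω(ε(η)ₙ) = (-1)ⁿ ω(η)`; this sign cancels the one in the
definition of `Tr_Λ`. Traces behave as expected because `⋀V` is free of finite rank, with the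
wedge monomials of a basis of `V` as a basis.
-/

open ExteriorAlgebra

variable (k : Type*) [CommRing k] (V : Type*) [AddCommGroup V] [Module k V]

-- the grading involution ε : +1 on even part, −1 on odd part
noncomputable def eps : ExteriorAlgebra k V →ₐ[k] ExteriorAlgebra k V :=
  ExteriorAlgebra.lift k ⟨-(ExteriorAlgebra.ι k (M := V)), fun m => by
    simp [ExteriorAlgebra.ι_sq_zero]⟩

-- the supertrace
noncomputable def strs (φ : Module.End k (ExteriorAlgebra k V)) : k :=
  LinearMap.trace k _ ((eps k V).toLinearMap ∘ₗ φ)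

-- projection onto the degree-n graded component
noncomputable def pr (n : ℕ) : ExteriorAlgebra k V →ₗ[k] ⋀[k]^n V :=
  (DirectSum.component k ℕ (fun i => (⋀[k]^i V : Submodule k (ExteriorAlgebra k V))) n) ∘ₗ
    (DirectSum.decomposeLinearEquiv (fun i : ℕ => (⋀[k]^i V : Submodule k (ExteriorAlgebra k V)))).toLinearMap

noncomputable def prEnd (n : ℕ) : Module.End k (ExteriorAlgebra k V) :=
  (Submodule.subtype _) ∘ₗ pr k V n

-- the degree-d homogeneous component of an endomorphism
noncomputable def cpt (d : ℤ) (φ : Module.End k (ExteriorAlgebra k V)) :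
    Module.End k (ExteriorAlgebra k V) :=
  ∑ m ∈ Finset.range (Module.finrank k V + 1),
    if 0 ≤ (m : ℤ) + d then prEnd k V ((m : ℤ) + d).toNat ∘ₗ φ ∘ₗ prEnd k V m else 0

-- generalized supertrace of a degree-(−n) homogeneous endomorphism
noncomputable def TrHom (n : ℕ) (φ : Module.End k (ExteriorAlgebra k V)) :
    Module.Dual k (⋀[k]^n V) where
  toFun η := (-1 : k) ^ n * strs k V ((LinearMap.mulLeft k (η : ExteriorAlgebra k V)) ∘ₗ φ)
  map_add' x y := by
    have h : ∀ a b : ExteriorAlgebra k V, LinearMap.mulLeft k (a + b) =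
        LinearMap.mulLeft k a + LinearMap.mulLeft k b := fun a b => by
      ext z; simp [add_mul]
    simp [h, strs, LinearMap.comp_add, LinearMap.add_comp, mul_add]
  map_smul' c x := by
    have h : ∀ (c : k) (a : ExteriorAlgebra k V), LinearMap.mulLeft k (c • a) =
        c • LinearMap.mulLeft k a := fun c a => by
      ext z; simp [smul_mul_assoc]
    simp [h, strs, LinearMap.comp_smul, LinearMap.smul_comp]
    ring

-- generalized supertrace of an arbitrary endomorphism, at level n
noncomputable def TrGen (n : ℕ) (φ : Module.End k (ExteriorAlgebra k V)) :
    Module.Dual k (⋀[k]^n V) :=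
  TrHom k V n (cpt k V (-(n : ℤ)) φ)

-- the embedding i : ⋀ V^∨ → End(⋀ V)
noncomputable def iEmb (n : ℕ) (α : Module.Dual k (⋀[k]^n V)) :
    Module.End k (ExteriorAlgebra k V) :=
  (Algebra.linearMap k (ExteriorAlgebra k V)) ∘ₗ α ∘ₗ pr k V n

-- i ∘ Tr_Λ as a single endomorphism, and its even/odd parts
noncomputable def iTr (φ : Module.End k (ExteriorAlgebra k V)) :
    Module.End k (ExteriorAlgebra k V) :=
  ∑ n ∈ Finset.range (Module.finrank k V + 1), iEmb k V n (TrGen k V n φ)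

noncomputable def iTrEven (φ : Module.End k (ExteriorAlgebra k V)) :
    Module.End k (ExteriorAlgebra k V) :=
  ∑ n ∈ Finset.range (Module.finrank k V + 1),
    if Even n then iEmb k V n (TrGen k V n φ) else 0

noncomputable def iTrOdd (φ : Module.End k (ExteriorAlgebra k V)) :
    Module.End k (ExteriorAlgebra k V) :=
  ∑ n ∈ Finset.range (Module.finrank k V + 1),
    if ¬ Even n then iEmb k V n (TrGen k V n φ) else 0

-- parity submodules
noncomputable def evenSub : Submodule k (ExteriorAlgebra k V) :=
  ⨆ n : ℕ, ⋀[k]^(2 * n) V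

noncomputable def oddSub : Submodule k (ExteriorAlgebra k V) :=
  ⨆ n : ℕ, ⋀[k]^(2 * n + 1) V

def IsEvenMap (f : Module.End k (ExteriorAlgebra k V)) : Prop :=
  (∀ x ∈ evenSub k V, f x ∈ evenSub k V) ∧ (∀ x ∈ oddSub k V, f x ∈ oddSub k V)

def IsOddMap (f : Module.End k (ExteriorAlgebra k V)) : Prop :=
  (∀ x ∈ evenSub k V, f x ∈ oddSub k V) ∧ (∀ x ∈ oddSub k V, f x ∈ evenSub k V)

def IsEvenDeriv (δ : Module.End k (ExteriorAlgebra k V)) : Prop :=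
  IsEvenMap k V δ ∧ ∀ x y : ExteriorAlgebra k V, δ (x * y) = δ x * y + x * δ y

def IsOddDeriv (δ : Module.End k (ExteriorAlgebra k V)) : Prop :=
  IsOddMap k V δ ∧
  (∀ x ∈ evenSub k V, ∀ y : ExteriorAlgebra k V, δ (x * y) = δ x * y + x * δ y) ∧
  (∀ x ∈ oddSub k V, ∀ y : ExteriorAlgebra k V, δ (x * y) = δ x * y - x * δ y)

-- supercommutator of parity-decomposed endomorphisms, [a₀+a₁, b₀+b₁]ₛ
def sComm (a₀ a₁ b₀ b₁ : Module.End k (ExteriorAlgebra k V)) :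
    Module.End k (ExteriorAlgebra k V) :=
  (a₀ * b₀ - b₀ * a₀) + (a₀ * b₁ - b₁ * a₀) + (a₁ * b₀ - b₀ * a₁) + (a₁ * b₁ + b₁ * a₁)

def IsHomogeneousOfDegree (d : ℤ) (φ : Module.End k (ExteriorAlgebra k V)) : Prop :=
  ∀ m : ℕ, ∀ x ∈ ⋀[k]^m V,
    (∀ m' : ℕ, (m' : ℤ) = (m : ℤ) + d → φ x ∈ ⋀[k]^m' V) ∧ ((m : ℤ) + d < 0 → φ x = 0)

namespace ExteriorAlgebra

variable {k V}

noncomputable def _root_.Module.Basis.exteriorAlgebra {ι : Type*} [LinearOrder ι]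
    (b : Module.Basis ι k V) : Module.Basis (Finset ι) k (ExteriorAlgebra k V) :=
  ((DirectSum.Decomposition.isInternal fun n : ℕ => ⋀[k]^n V).collectedBasis
    fun n => b.exteriorPower n).reindex Set.powersetCard.prodEquiv

instance instModuleFree [Module.Free k V] : Module.Free k (ExteriorAlgebra k V) := by
  classical
  let : LinearOrder (Module.Free.ChooseBasisIndex k V) := linearOrderOfSTO WellOrderingRel
  exact .of_basis (Module.Free.chooseBasis k V).exteriorAlgebra

instance instModuleFinite [Module.Free k V] [Module.Finite k V] :
    Module.Finite k (ExteriorAlgebra k V) := by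
  classical
  let : LinearOrder (Module.Free.ChooseBasisIndex k V) := linearOrderOfSTO WellOrderingRel
  exact .of_basis (Module.Free.chooseBasis k V).exteriorAlgebra

end ExteriorAlgebra

section

variable {k V}

theorem eps_apply_of_mem_exteriorPower {n : ℕ} {x : ExteriorAlgebra k V}
    (hx : x ∈ ⋀[k]^n V) : eps k V x = (-1 : k) ^ n • x := by
  induction hx using Submodule.pow_induction_on_left' with
  | algebraMap _ => simp
  | add y z i _ _ hy hz => rw [map_add, hy, hz, smul_add]
  | mem_mul m hm i y _ hy =>
    obtain ⟨v, rfl⟩ := hm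
    rw [map_mul, hy, eps, lift_ι_apply, LinearMap.neg_apply, neg_mul, mul_smul_comm, pow_succ',
      mul_smul, neg_one_smul]

theorem TrHom_apply (n : ℕ) (φ : Module.End k (ExteriorAlgebra k V)) (η : ⋀[k]^n V) :
    TrHom k V n φ η =
      (-1 : k) ^ n * strs k V (LinearMap.mulLeft k (η : ExteriorAlgebra k V) ∘ₗ φ) :=
  rfl

theorem pr_coe {n : ℕ} (η : ⋀[k]^n V) : pr k V n η = η := by
  simp [pr]

theorem comp_iEmb_eq_smulRight (n : ℕ) (ω : Module.Dual k (⋀[k]^n V))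
    (f : Module.End k (ExteriorAlgebra k V)) :
    f ∘ₗ iEmb k V n ω = (ω ∘ₗ pr k V n).smulRight (f 1) := by
  ext x
  simp [iEmb, Algebra.algebraMap_eq_smul_one]

theorem strs_comp_iEmb [Module.Free k V] [Module.Finite k V] (n : ℕ)
    (ω : Module.Dual k (⋀[k]^n V)) (f : Module.End k (ExteriorAlgebra k V)) :
    strs k V (f ∘ₗ iEmb k V n ω) = ω (pr k V n (eps k V (f 1))) := by
  rw [strs, ← LinearMap.comp_assoc, comp_iEmb_eq_smulRight, LinearMap.trace_smulRight]
  rfl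

end

theorem generalized_supertrace_comp_iEmb
    [Module.Free k V] [Module.Finite k V]
    (n : ℕ) (ω : Module.Dual k (⋀[k]^n V)) :
    TrHom k V n (iEmb k V n ω) = ω := by
  refine LinearMap.ext fun η => ?_
  rw [TrHom_apply, strs_comp_iEmb, LinearMap.mulLeft_apply, mul_one,
    eps_apply_of_mem_exteriorPower η.2, map_smul, pr_coe, map_smul, smul_eq_mul, ← mul_assoc,
    ← pow_add, Even.neg_one_pow ⟨n, rfl⟩, one_mul]
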